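/- Tweedie's formula: if X_t = X_0 + sigma Z with Z standard Gaussian independent of X_0, then the score of the density p_t of X_t satisfies grad log p_t(x) = (E[X_0 | X_t = x] - x) / sigma^2. -/

import Mathlib

open MeasureTheory Real

/-- The isotropic Gaussian density with standard deviation `σ` on `ℝ^d`. -/
noncomputable def gaussDens (d : ℕ) (σ : ℝ) (x : EuclideanSpace ℝ (Fin d)) : ℝ :=
  (2 * π * σ ^ 2) ^ (-(d : ℝ) / 2) * Real.exp (-‖x‖ ^ 2 / (2 * σ ^ 2))

/-!
Since `∇ log p_t = p_t⁻¹ • ∇ p_t`, the formula reduces to splitting the integral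
`∫ p₀ y φ(x - y) (y - x) dy = ∫ p₀ y φ(x - y) y dy - p_t x • x` for the Gaussian kernel `φ`.
This needs `y ↦ p₀ y φ(x - y) y` to be integrable, which holds because `φ(z) ‖z‖` is bounded.
-/

lemma HasGradientAt.log {F : Type*} [NormedAddCommGroup F] [InnerProductSpace ℝ F]
    [CompleteSpace F] {f : F → ℝ} {g x : F} (hf : HasGradientAt f g x) (hx : f x ≠ 0) :
    HasGradientAt (fun z => Real.log (f z)) ((f x)⁻¹ • g) x := by
  rw [hasGradientAt_iff_hasFDerivAt, map_smul]
  exact hf.hasFDerivAt.log hx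

lemma mul_exp_neg_sq_div_le {σ : ℝ} (hσ : 0 < σ) (t : ℝ) :
    t * exp (-t ^ 2 / (2 * σ ^ 2)) ≤ σ := by
  have hexp : 1 + t ^ 2 / (2 * σ ^ 2) ≤ exp (t ^ 2 / (2 * σ ^ 2)) := by
    linarith [add_one_le_exp (t ^ 2 / (2 * σ ^ 2))]
  have hamgm : t ≤ σ * (1 + t ^ 2 / (2 * σ ^ 2)) := by
    rw [show σ * (1 + t ^ 2 / (2 * σ ^ 2)) = (2 * σ ^ 2 + t ^ 2) / (2 * σ) by field_simp,
      le_div_iff₀ (by positivity)]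
    nlinarith [sq_nonneg (t - σ)]
  rw [neg_div, exp_neg, ← div_eq_mul_inv, div_le_iff₀ (exp_pos _)]
  exact hamgm.trans (mul_le_mul_of_nonneg_left hexp hσ.le)

lemma norm_gaussDens_sub_smul_le {d : ℕ} {σ : ℝ} (hσ : 0 < σ) (x y : EuclideanSpace ℝ (Fin d)) :
    ‖gaussDens d σ (x - y) • y‖ ≤ (2 * π * σ ^ 2) ^ (-(d : ℝ) / 2) * (‖x‖ + σ) := by
  set t := ‖x - y‖
  have hE : exp (-t ^ 2 / (2 * σ ^ 2)) ≤ 1 := by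
    rw [exp_le_one_iff, neg_div]
    exact neg_nonpos.mpr (by positivity)
  have hA : 0 ≤ (2 * π * σ ^ 2) ^ (-(d : ℝ) / 2) := by positivity
  rw [norm_smul, gaussDens, norm_mul, norm_of_nonneg hA, norm_of_nonneg (exp_pos _).le, mul_assoc]
  gcongr
  calc exp (-t ^ 2 / (2 * σ ^ 2)) * ‖y‖
      ≤ exp (-t ^ 2 / (2 * σ ^ 2)) * (‖x‖ + t) := by gcongr; exact norm_le_norm_add_norm_sub x y
    _ = exp (-t ^ 2 / (2 * σ ^ 2)) * ‖x‖ + t * exp (-t ^ 2 / (2 * σ ^ 2)) := by ring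
    _ ≤ 1 * ‖x‖ + σ := by
        gcongr
        exact mul_exp_neg_sq_div_le hσ t
    _ = ‖x‖ + σ := by rw [one_mul]

lemma integrable_mul_gaussDens_smul {d : ℕ} {σ : ℝ} (hσ : 0 < σ)
    {p : EuclideanSpace ℝ (Fin d) → ℝ} (hp : Integrable p) (x : EuclideanSpace ℝ (Fin d)) :
    Integrable fun y => (p y * gaussDens d σ (x - y)) • y := by
  simp_rw [mul_smul]
  refine hp.smul_bdd _ (Continuous.aestronglyMeasurable ?_)
    (Filter.Eventually.of_forall (norm_gaussDens_sub_smul_le hσ x))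
  unfold gaussDens
  fun_prop

lemma integral_div_smul_sub {F : Type*} [NormedAddCommGroup F] [NormedSpace ℝ F]
    [CompleteSpace F] [MeasurableSpace F] {μ : Measure F} {f : F → ℝ} (hf : Integrable f μ)
    (hfy : Integrable (fun y => f y • y) μ) (c : ℝ) (x : F) :
    ∫ y, (f y / c) • (y - x) ∂μ = c⁻¹ • ((∫ y, f y • y ∂μ) - (∫ y, f y ∂μ) • x) := by
  simp_rw [div_eq_inv_mul, mul_smul, smul_sub (f _)]
  rw [integral_smul, integral_sub hfy (hf.smul_const x), integral_smul_const]

theorem tweedie_formula_general {d : ℕ} (σ : ℝ) (hσ : 0 < σ)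
    (p₀ : EuclideanSpace ℝ (Fin d) → ℝ)
    (hp₀_prob : ∫ x, p₀ x = 1)
    (pt : EuclideanSpace ℝ (Fin d) → ℝ)
    (hpt : ∀ x, pt x = ∫ y, p₀ y * gaussDens d σ (x - y))
    (m : EuclideanSpace ℝ (Fin d) → EuclideanSpace ℝ (Fin d))
    (hm : ∀ x, m x = (pt x)⁻¹ • ∫ y, (p₀ y * gaussDens d σ (x - y)) • y)
    -- differentiation under the integral sign is valid:
    (hderiv : ∀ x, HasGradientAt pt
      (∫ y, ((p₀ y * gaussDens d σ (x - y)) / σ ^ 2) • (y - x)) x)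
    (x : EuclideanSpace ℝ (Fin d)) (hx : 0 < pt x) :
    HasGradientAt (fun z => Real.log (pt z)) ((σ ^ 2)⁻¹ • (m x - x)) x := by
  have hp₀ : Integrable p₀ := .of_integral_ne_zero (by rw [hp₀_prob]; exact one_ne_zero)
  have hf : Integrable fun y => p₀ y * gaussDens d σ (x - y) :=
    .of_integral_ne_zero (by rw [← hpt]; exact hx.ne')
  convert (hderiv x).log hx.ne' using 1
  rw [integral_div_smul_sub hf (integrable_mul_gaussDens_smul hσ hp₀ x), ← hpt, hm,
    smul_comm (pt x)⁻¹, smul_sub (pt x)⁻¹, inv_smul_smul₀ hx.ne']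

/-- **Tweedie's formula**: if `X_t = X_0 + σ Z` with `Z` standard Gaussian independent of
`X_0`, then the score of the density `p_t` of `X_t` satisfies
`∇ log p_t x = (E[X_0 | X_t = x] - x) / σ²`.  Here `p_t` is the Gaussian convolution of the
density `p₀` of `X_0`, `m x = E[X_0 | X_t = x]` is the conditional mean, and we assume that
differentiation under the integral sign is valid (`hderiv`). -/
theorem tweedie_formula {d : ℕ} (σ : ℝ) (hσ : 0 < σ)
    (p₀ : EuclideanSpace ℝ (Fin d) → ℝ)
    (hp₀_nonneg : ∀ x, 0 ≤ p₀ x)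
    (hp₀_prob : ∫ x, p₀ x = 1)
    (pt : EuclideanSpace ℝ (Fin d) → ℝ)
    (hpt : ∀ x, pt x = ∫ y, p₀ y * gaussDens d σ (x - y))
    (m : EuclideanSpace ℝ (Fin d) → EuclideanSpace ℝ (Fin d))
    (hm : ∀ x, m x = (pt x)⁻¹ • ∫ y, (p₀ y * gaussDens d σ (x - y)) • y)
    -- differentiation under the integral sign is valid:
    (hderiv : ∀ x, HasGradientAt pt
      (∫ y, ((p₀ y * gaussDens d σ (x - y)) / σ ^ 2) • (y - x)) x)
    (x : EuclideanSpace ℝ (Fin d)) (hx : 0 < pt x) :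
    HasGradientAt (fun z => Real.log (pt z)) ((σ ^ 2)⁻¹ • (m x - x)) x :=
  tweedie_formula_general σ hσ p₀ hp₀_prob pt hpt m hm hderiv x hx
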